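/- If T is a tree with n edges (hence n+1 vertices) that admits a graceful labelling, then the edge set of the complete graph K_{2n+1} on 2n+1 vertices can be partitioned into 2n+1 parts, each of which spans a subgraph isomorphic to T. Consequently, if every tree is graceful, then for every n and every tree T with n edges, K_{2n+1} decomposes into edge-disjoint copies of T. -/
import Mathlib


/-- The label induced on an unordered pair by a vertex labelling `f`:
`{a, b} ↦ |f a - f b|`. -/
def edgeLabel {V : Type*} (f : V → ℤ) : Sym2 V → ℤ :=
  Sym2.lift ⟨fun a b => |f a - f b|, fun a b => abs_sub_comm (f a) (f b)⟩

/-- `f` is a graceful labelling of `G`: a bijection onto `{0, …, card V - 1}` whose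
induced edge labelling is injective on the edge set. -/
def IsGracefulLabelling {V : Type*} [Fintype V] (G : SimpleGraph V)
    (f : V → Fin (Fintype.card V)) : Prop :=
  Function.Bijective f ∧ Set.InjOn (edgeLabel fun v => (f v : ℤ)) G.edgeSet

/-- The edge set of the complete graph `K_{2n+1}` can be partitioned into `2n+1` parts,
each of which is the edge set of an (injectively) embedded copy of `T`. -/
def DecomposesIntoCopies (n : ℕ) {V : Type*} (T : SimpleGraph V) : Prop :=
  ∃ parts : Fin (2 * n + 1) → Set (Sym2 (Fin (2 * n + 1))),
    (∀ i j, i ≠ j → Disjoint (parts i) (parts j)) ∧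
    (⋃ i, parts i) = (⊤ : SimpleGraph (Fin (2 * n + 1))).edgeSet ∧
    ∀ i, ∃ φ : V → Fin (2 * n + 1), Function.Injective φ ∧
      parts i = {e | ∃ a b, T.Adj a b ∧ e = s(φ a, φ b)}

/-- Two integers that agree mod `N` and are closer than `N` are equal. -/
lemma intCast_inj_of_abs_lt {N : ℕ} {u w : ℤ} (h : (u : ZMod N) = w) (habs : |u - w| < N) :
    u = w := by
  have hd : (N : ℤ) ∣ w - u := Int.ModEq.dvd ((ZMod.intCast_eq_intCast_iff u w N).mp h)
  have := Int.eq_zero_of_abs_lt_dvd hd (by rwa [abs_sub_comm])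
  omega

/-- The rotation construction: from an integer labelling of the vertices of `T` with values
in `{0, …, n}` that is injective, whose induced edge labelling is injective, and whose edge
labels cover `{1, …, n}`, one obtains a decomposition of `K_{2n+1}` (with vertex set
`ZMod (2n+1)`) into `2n+1` rotated copies of `T`. -/
lemma main_decomp (n : ℕ) {V : Type} (T : SimpleGraph V) (F : V → ℤ)
    (hinj : Function.Injective F)
    (hrange : ∀ v, 0 ≤ F v ∧ F v ≤ n)
    (hlabel : Set.InjOn (edgeLabel F) T.edgeSet)
    (hsurj : ∀ d : ℤ, 1 ≤ d → d ≤ n → ∃ a b, T.Adj a b ∧ F a - F b = d) :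
    ∃ parts : ZMod (2 * n + 1) → Set (Sym2 (ZMod (2 * n + 1))),
      (∀ i j, i ≠ j → Disjoint (parts i) (parts j)) ∧
      (⋃ i, parts i) = (⊤ : SimpleGraph (ZMod (2 * n + 1))).edgeSet ∧
      ∀ i, ∃ φ : V → ZMod (2 * n + 1), Function.Injective φ ∧
        parts i = {e | ∃ a b, T.Adj a b ∧ e = s(φ a, φ b)} := by
  set N := 2 * n + 1 with hN
  have hNZ : ((N : ℕ) : ℤ) = 2 * n + 1 := by push_cast [hN]; ring
  have habs2 : ∀ a b : V, |F a - F b| ≤ n := by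
    intro a b
    obtain ⟨h1, h2⟩ := hrange a
    obtain ⟨h3, h4⟩ := hrange b
    rw [abs_le]; constructor <;> linarith
  have hφinj : ∀ i : ZMod N, Function.Injective (fun v => (F v : ZMod N) + i) := by
    intro i a b h
    simp only [add_left_inj] at h
    refine hinj (intCast_inj_of_abs_lt h ?_)
    have := habs2 a b
    rw [hNZ]; linarith
  have hkey : ∀ (i j : ZMod N) (a b c d : V), T.Adj a b → T.Adj c d →
      (F a : ZMod N) + i = (F c : ZMod N) + j → (F b : ZMod N) + i = (F d : ZMod N) + j →
      i = j := by
    intro i j a b c d hab hcd h1 h2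
    have hcast : ((F a - F b : ℤ) : ZMod N) = ((F c - F d : ℤ) : ZMod N) := by
      push_cast
      linear_combination h1 - h2
    have huw : F a - F b = F c - F d := by
      refine intCast_inj_of_abs_lt hcast ?_
      have t1 := habs2 a b
      have t2 := habs2 c d
      have t3 := abs_sub (F a - F b) (F c - F d)
      rw [hNZ]; linarith
    have hlabeq : edgeLabel F s(a, b) = edgeLabel F s(c, d) := by
      simp only [edgeLabel, Sym2.lift_mk]
      rw [huw]
    have heq := hlabel (T.mem_edgeSet.mpr hab) (T.mem_edgeSet.mpr hcd) hlabeq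
    rw [Sym2.eq_iff] at heq
    rcases heq with ⟨rfl, rfl⟩ | ⟨rfl, rfl⟩
    · exact add_left_cancel h1
    · exact absurd (hinj (by linarith)) hab.ne
  refine ⟨fun i => {e | ∃ a b, T.Adj a b ∧ e = s((F a : ZMod N) + i, (F b : ZMod N) + i)},
    ?_, ?_, ?_⟩
  · intro i j hij
    rw [Set.disjoint_left]
    rintro e ⟨a, b, hab, rfl⟩ ⟨c, d, hcd, heq⟩
    rw [Sym2.eq_iff] at heq
    rcases heq with ⟨h1, h2⟩ | ⟨h1, h2⟩
    · exact hij (hkey i j a b c d hab hcd h1 h2)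
    · exact hij (hkey i j a b d c hab hcd.symm h1 h2)
  · ext e
    simp only [Set.mem_iUnion, Set.mem_setOf_eq]
    constructor
    · rintro ⟨i, a, b, hab, rfl⟩
      rw [SimpleGraph.mem_edgeSet, SimpleGraph.top_adj]
      exact fun h => hab.ne (hφinj i h)
    · intro he
      induction e using Sym2.ind with
      | _ x y =>
        rw [SimpleGraph.mem_edgeSet, SimpleGraph.top_adj] at he
        have hz : x - y ≠ 0 := sub_ne_zero.mpr he
        set k := (x - y).val with hk
        have hk0 : k ≠ 0 := fun h => hz ((ZMod.val_eq_zero _).mp h)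
        have hkN : k < N := ZMod.val_lt _
        have hzk : ((k : ℕ) : ZMod N) = x - y := ZMod.natCast_rightInverse _
        rcases le_or_gt k n with hkn | hkn
        · obtain ⟨a, b, hab, hd⟩ := hsurj (k : ℤ)
            (by exact_mod_cast Nat.one_le_iff_ne_zero.mpr hk0) (by exact_mod_cast hkn)
          refine ⟨x - (F a : ZMod N), a, b, hab, ?_⟩
          have hh : (F a : ZMod N) - (F b : ZMod N) = x - y := by
            have := congrArg (fun t : ℤ => (t : ZMod N)) hd
            push_cast at this
            rw [this, hzk]
          have e1 : (F a : ZMod N) + (x - (F a : ZMod N)) = x := by ring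
          have e2 : (F b : ZMod N) + (x - (F a : ZMod N)) = y := by linear_combination -hh
          rw [e1, e2]
        · obtain ⟨a, b, hab, hd⟩ := hsurj ((N : ℤ) - k) (by rw [hNZ]; omega)
            (by rw [hNZ]; omega)
          refine ⟨y - (F a : ZMod N), a, b, hab, ?_⟩
          have hN0 : ((N : ℕ) : ZMod N) = 0 := ZMod.natCast_self N
          have hh : (F a : ZMod N) - (F b : ZMod N) = y - x := by
            have := congrArg (fun t : ℤ => (t : ZMod N)) hd
            push_cast at this
            rw [hzk] at this
            rw [this]
            push_cast at hN0
            linear_combination hN0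
          have e1 : (F a : ZMod N) + (y - (F a : ZMod N)) = y := by ring
          have e2 : (F b : ZMod N) + (y - (F a : ZMod N)) = x := by linear_combination -hh
          rw [e1, e2]
          exact Sym2.eq_swap
  · intro i
    exact ⟨fun v => (F v : ZMod N) + i, hφinj i, rfl⟩

/-- If a tree `T` with `n` edges (hence `n+1` vertices) admits a graceful labelling, then
`K_{2n+1}` decomposes into `2n+1` edge-disjoint copies of `T`.  Consequently, if every tree
is graceful, then for every `n`, `K_{2n+1}` decomposes into edge-disjoint copies of every
tree with `n` edges. -/
theorem graceful_implies_ringel_decomposition :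
    (∀ (n : ℕ) {V : Type} [Fintype V] (T : SimpleGraph V),
      T.Connected → T.IsAcyclic → Fintype.card V = n + 1 →
      (∃ f : V → Fin (Fintype.card V), IsGracefulLabelling T f) →
      DecomposesIntoCopies n T) ∧
    ((∀ {V : Type} [Fintype V] (T : SimpleGraph V), T.Connected → T.IsAcyclic →
        ∃ f : V → Fin (Fintype.card V), IsGracefulLabelling T f) →
      ∀ (n : ℕ) {V : Type} [Fintype V] (T : SimpleGraph V),
        T.Connected → T.IsAcyclic → Fintype.card V = n + 1 →
        DecomposesIntoCopies n T) := by
  have main : ∀ (n : ℕ) {V : Type} [Fintype V] (T : SimpleGraph V),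
      T.Connected → T.IsAcyclic → Fintype.card V = n + 1 →
      (∃ f : V → Fin (Fintype.card V), IsGracefulLabelling T f) →
      DecomposesIntoCopies n T := by
    intro n V _ T hconn hacyc hcard hex
    obtain ⟨f, hbij, hlab⟩ := hex
    classical
    set F : V → ℤ := fun v => (f v : ℤ) with hF
    have hfi : Function.Injective f := hbij.injective
    have hFinj : Function.Injective F := by
      intro a b h
      have h' : ((f a : ℕ) : ℤ) = ((f b : ℕ) : ℤ) := h
      exact hfi (Fin.ext (by exact_mod_cast h'))
    have hrange : ∀ v, 0 ≤ F v ∧ F v ≤ n := by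
      intro v
      refine ⟨Int.natCast_nonneg _, ?_⟩
      have h1 := (f v).isLt
      have h2 : (f v : ℕ) ≤ n := by omega
      show ((f v : ℕ) : ℤ) ≤ (n : ℤ)
      exact_mod_cast h2
    have hT : T.IsTree := ⟨hconn, hacyc⟩
    have hE : T.edgeFinset.card = n := by have := hT.card_edgeFinset; omega
    have hinjF : Set.InjOn (edgeLabel F) T.edgeFinset := by
      rw [SimpleGraph.coe_edgeFinset]; exact hlab
    have himage : T.edgeFinset.image (edgeLabel F) = Finset.Icc (1 : ℤ) n := by
      apply Finset.eq_of_subset_of_card_le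
      · intro d hd
        simp only [Finset.mem_image] at hd
        obtain ⟨e, he, rfl⟩ := hd
        have he' : e ∈ T.edgeSet := SimpleGraph.mem_edgeFinset.mp he
        induction e using Sym2.ind with
        | _ a b =>
          have hab : T.Adj a b := he'
          simp only [edgeLabel, Sym2.lift_mk, Finset.mem_Icc]
          obtain ⟨h1, h2⟩ := hrange a
          obtain ⟨h3, h4⟩ := hrange b
          have h5 : F a ≠ F b := fun h => hab.ne (hFinj h)
          constructor
          · exact Int.one_le_abs (sub_ne_zero.mpr h5)
          · rw [abs_le]; constructor <;> linarith
      · rw [Finset.card_image_of_injOn hinjF, hE, Int.card_Icc]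
        simp
    have hsurj : ∀ d : ℤ, 1 ≤ d → d ≤ n → ∃ a b, T.Adj a b ∧ F a - F b = d := by
      intro d h1 h2
      have hd : d ∈ T.edgeFinset.image (edgeLabel F) := by
        rw [himage, Finset.mem_Icc]; exact ⟨h1, h2⟩
      rw [Finset.mem_image] at hd
      obtain ⟨e, he, hLe⟩ := hd
      have he' : e ∈ T.edgeSet := SimpleGraph.mem_edgeFinset.mp he
      induction e using Sym2.ind with
      | _ a b =>
        have hab : T.Adj a b := he'
        have habs : |F a - F b| = d := by simpa [edgeLabel] using hLe
        rcases abs_cases (F a - F b) with ⟨h3, _⟩ | ⟨h3, _⟩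
        · exact ⟨a, b, hab, by linarith⟩
        · exact ⟨b, a, hab.symm, by linarith⟩
    exact main_decomp n T F hFinj hrange hlab hsurj
  exact ⟨main, fun h n V _ T hc ha hcard => main n T hc ha hcard (h T hc ha)⟩
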